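/- arXiv:1302.3665 — 10 statements merged into one kernel-verified Lean document; each statement's English description precedes it below -/
import Mathlib

section
/- Let (X_i)_{i ∈ I} be a family of nonempty non-trivial topological spaces. For any two filters 𝓕 and 𝓖 on I, one has 𝓕 ⊆ 𝓖 (every member of 𝓕 is a member of 𝓖) if and only if the 𝓕-topology on ∏_{i ∈ I} X_i is coarser than or equal to the 𝓖-topology (every 𝓕-open set is 𝓖-open). In other words, the map sending a filter 𝓕 on I to the 𝓕-topology is an order embedding. -/
open Set TopologicalSpace Topology Filter

/-- The `𝓕`-topology on `∏ i, X i` determined by a filter `F` on `I`: the topology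
generated by the boxes `∏ i, U i` (each `U i` open) whose set of distinguished
indices `{i | U i = univ}` belongs to `F`. -/
def FTopology {I : Type*} (X : I → Type*) [∀ i, TopologicalSpace (X i)]
    (F : Filter I) : TopologicalSpace (∀ i, X i) :=
  TopologicalSpace.generateFrom
    {S | ∃ U : ∀ i, Set (X i), (∀ i, IsOpen (U i)) ∧ {i | U i = Set.univ} ∈ F ∧
      S = Set.pi Set.univ U}

/-- Key lemma: any `G`-open set containing a point contains a `G`-box around it. -/
lemma fTopology_exists_box {I : Type*} (X : I → Type*) [∀ i, TopologicalSpace (X i)]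
    (G : Filter I) {T : Set (∀ i, X i)}
    (hT : IsOpen[FTopology X G] T) {x : ∀ i, X i} (hx : x ∈ T) :
    ∃ V : ∀ i, Set (X i), (∀ i, IsOpen (V i)) ∧ {i | V i = Set.univ} ∈ G ∧
      x ∈ Set.pi Set.univ V ∧ Set.pi Set.univ V ⊆ T := by
  induction hT with
  | basic S hS =>
    obtain ⟨U, hUo, hUF, rfl⟩ := hS
    exact ⟨U, hUo, hUF, hx, subset_rfl⟩
  | univ =>
    exact ⟨fun _ => Set.univ, fun _ => isOpen_univ, by simp, by simp, by simp⟩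
  | inter S₁ S₂ _ _ ih₁ ih₂ =>
    obtain ⟨V₁, hV₁o, hV₁G, hxV₁, hV₁S⟩ := ih₁ hx.1
    obtain ⟨V₂, hV₂o, hV₂G, hxV₂, hV₂S⟩ := ih₂ hx.2
    refine ⟨fun i => V₁ i ∩ V₂ i, fun i => (hV₁o i).inter (hV₂o i), ?_, ?_, ?_⟩
    · filter_upwards [hV₁G, hV₂G] with i h1 h2
      show V₁ i ∩ V₂ i = Set.univ
      rw [show V₁ i = Set.univ from h1, show V₂ i = Set.univ from h2, Set.univ_inter]
    · exact fun i _ => ⟨hxV₁ i (by trivial), hxV₂ i (by trivial)⟩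
    · intro y hy
      exact ⟨hV₁S fun i hi => (hy i hi).1, hV₂S fun i hi => (hy i hi).2⟩
  | sUnion 𝒮 _ ih =>
    obtain ⟨S, hS𝒮, hxS⟩ := hx
    obtain ⟨V, h1, h2, h3, h4⟩ := ih S hS𝒮 hxS
    exact ⟨V, h1, h2, h3, h4.trans (Set.subset_sUnion_of_mem hS𝒮)⟩

/-- For a family of nonempty non-trivial topological spaces, `𝓕 ⊆ 𝓖` (as sets of
subsets of `I`) iff the `𝓕`-topology is coarser than or equal to the `𝓖`-topology:
the map from filters on `I` to `𝓕`-topologies is an order embedding. -/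
theorem fTopology_orderEmbedding {I : Type*} (X : I → Type*)
    [∀ i, TopologicalSpace (X i)] [∀ i, Nonempty (X i)]
    (hnt : ∀ i, ∃ U : Set (X i), IsOpen U ∧ U ≠ ∅ ∧ U ≠ Set.univ)
    (F G : Filter I) :
    (∀ s : Set I, s ∈ F → s ∈ G) ↔
      (∀ S : Set (∀ i, X i), IsOpen[FTopology X F] S → IsOpen[FTopology X G] S) := by
  constructor
  · intro h S hS
    induction hS with
    | basic S hS =>
      obtain ⟨U, hUo, hUF, rfl⟩ := hS
      exact TopologicalSpace.GenerateOpen.basic _ ⟨U, hUo, h _ hUF, rfl⟩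
    | univ => exact TopologicalSpace.GenerateOpen.univ
    | inter S₁ S₂ _ _ ih₁ ih₂ => exact TopologicalSpace.GenerateOpen.inter _ _ ih₁ ih₂
    | sUnion 𝒮 _ ih => exact TopologicalSpace.GenerateOpen.sUnion _ ih
  · intro h s hs
    classical
    choose U hUo hUne hUnu using hnt
    set W : ∀ i, Set (X i) := fun i => if i ∈ s then Set.univ else U i with hW
    have hWopen : IsOpen[FTopology X F] (Set.pi Set.univ W) := by
      refine TopologicalSpace.GenerateOpen.basic _
        ⟨W, fun i => ?_, ?_, rfl⟩
      · by_cases hi : i ∈ s <;> simp [hW, hi, hUo]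
      · exact Filter.mem_of_superset hs fun i hi => by simp [hW, hi]
    have hWG := h _ hWopen
    have hWne : ∀ i, (W i).Nonempty := by
      intro i
      by_cases hi : i ∈ s
      · simp [hW, hi]
      · simpa [hW, hi, Set.nonempty_iff_ne_empty] using hUne i
    choose x hx using hWne
    have hxW : x ∈ Set.pi Set.univ W := fun i _ => hx i
    obtain ⟨V, hVo, hVG, hxV, hVW⟩ := fTopology_exists_box X G hWG hxW
    refine Filter.mem_of_superset hVG fun i hi => ?_
    simp only [Set.mem_setOf_eq] at hi
    by_contra his
    -- then W i = U i ≠ univ, but V i = univ ⊆ W i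
    have hsub : V i ⊆ W i := by
      intro y hy
      have hz : Function.update x i y ∈ Set.pi Set.univ V := by
        intro j _
        by_cases hj : j = i
        · subst hj; simpa using hy
        · simpa [Function.update_of_ne hj] using hxV j (by trivial)
      have := hVW hz i (by trivial)
      simpa using this
    have : W i = Set.univ := Set.eq_univ_of_univ_subset (hi ▸ hsub)
    simp only [hW, if_neg his] at this
    exact hUnu i this
end

section
/- Let (X_i)_{i ∈ I} be a family of nonempty non-trivial topological spaces and let 𝓕 be a filter on I. All projection maps p_i : ∏_{i ∈ I} X_i → X_i are continuous with respect to the 𝓕-topology if and only if 𝓕 is finer than the cofinite filter on I (i.e., every cofinite subset of I belongs to 𝓕). -/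
open Set TopologicalSpace Topology Filter

theorem fTopology_basis {I : Type*} (X : I → Type*) [∀ i, TopologicalSpace (X i)]
    (F : Filter I) :
    @TopologicalSpace.IsTopologicalBasis _ (FTopology X F)
      {S | ∃ U : ∀ i, Set (X i), (∀ i, IsOpen (U i)) ∧ {i | U i = Set.univ} ∈ F ∧
        S = Set.pi Set.univ U} := by
  letI := FTopology X F
  refine ⟨?_, ?_, rfl⟩
  · rintro t₁ ⟨U, hU, hUF, rfl⟩ t₂ ⟨V, hV, hVF, rfl⟩ x hx
    refine ⟨Set.pi Set.univ (fun i => U i ∩ V i),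
      ⟨fun i => U i ∩ V i, fun i => (hU i).inter (hV i), ?_, rfl⟩, ?_, ?_⟩
    · refine Filter.mem_of_superset (Filter.inter_mem hUF hVF) ?_
      rintro i ⟨h1, h2⟩
      simp only [Set.mem_setOf_eq] at h1 h2 ⊢
      rw [h1, h2, Set.univ_inter]
    · intro i _
      exact ⟨hx.1 i (Set.mem_univ i), hx.2 i (Set.mem_univ i)⟩
    · rw [Set.pi_inter_distrib]
  · apply Set.eq_univ_of_univ_subset
    intro x _
    exact ⟨Set.univ, ⟨fun i => Set.univ, fun i => isOpen_univ, by simp, by simp⟩,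
      Set.mem_univ x⟩

/-- For a family of nonempty non-trivial spaces, all projections are continuous
with respect to the `𝓕`-topology iff `𝓕` is finer than the cofinite filter on `I`
(i.e. every cofinite subset of `I` belongs to `𝓕`). -/
theorem fTopology_continuous_proj_iff {I : Type*} (X : I → Type*)
    [∀ i, TopologicalSpace (X i)] [∀ i, Nonempty (X i)]
    (hnt : ∀ i, ∃ U : Set (X i), IsOpen U ∧ U ≠ ∅ ∧ U ≠ Set.univ)
    (F : Filter I) :
    (∀ i : I, Continuous[FTopology X F, _] (fun f : ∀ j, X j => f i)) ↔
      (∀ s : Set I, s ∈ Filter.cofinite → s ∈ F) := by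
  classical
  letI := FTopology X F
  constructor
  · intro hc s hs
    have key : ∀ i : I, ({i}ᶜ : Set I) ∈ F := by
      intro i
      obtain ⟨V, hVopen, hVne, hVuniv⟩ := hnt i
      have hpre : IsOpen[FTopology X F] ((fun f : ∀ j, X j => f i) ⁻¹' V) :=
        hVopen.preimage (hc i)
      obtain ⟨x, hx⟩ := Set.nonempty_iff_ne_empty.2 hVne
      obtain ⟨y, hy⟩ := Set.nonempty_compl.2 hVuniv
      set f : ∀ j, X j := Function.update (fun j => Classical.arbitrary (X j)) i x with hf
      have hfmem : f ∈ (fun f : ∀ j, X j => f i) ⁻¹' V := by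
        simp [hf, Function.update_self, hx]
      obtain ⟨B, ⟨U, hUopen, hUF, rfl⟩, hfB, hBsub⟩ :=
        (fTopology_basis X F).exists_subset_of_mem_open hfmem hpre
      refine Filter.mem_of_superset hUF ?_
      intro j (hj : U j = Set.univ)
      simp only [Set.mem_compl_iff, Set.mem_singleton_iff]
      rintro rfl
      have hgmem : Function.update f j y ∈ Set.pi Set.univ U := by
        intro k _
        by_cases hk : k = j
        · subst hk
          rw [Function.update_self, hj]; exact Set.mem_univ _
        · rw [Function.update_of_ne hk]
          exact hfB k (Set.mem_univ k)
      have := hBsub hgmem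
      simp only [Set.mem_preimage, Function.update_self] at this
      exact hy this
    have hfin : (sᶜ : Set I).Finite := hs
    have : (⋂ j ∈ sᶜ, ({j}ᶜ : Set I)) ∈ F :=
      (Filter.biInter_mem hfin).2 fun j _ => key j
    convert this using 1
    ext x
    simp only [Set.mem_iInter, Set.mem_compl_iff, Set.mem_singleton_iff]
    constructor
    · intro hx j hj hxj; exact hj (hxj ▸ hx)
    · intro h; by_contra hx; exact h x hx rfl
  · intro h i
    rw [continuous_def]
    intro V hV
    set U : ∀ j, Set (X j) := Function.update (fun j => (Set.univ : Set (X j))) i V with hU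
    have hpre : (fun f : ∀ j, X j => f i) ⁻¹' V = Set.pi Set.univ U := by
      ext f
      constructor
      · intro hf j _
        by_cases hj : j = i
        · subst hj; rw [hU, Function.update_self]; exact hf
        · rw [hU, Function.update_of_ne hj]; exact Set.mem_univ _
      · intro hf
        have := hf i (Set.mem_univ i)
        rwa [hU, Function.update_self] at this
    rw [hpre]
    apply TopologicalSpace.isOpen_generateFrom_of_mem
    refine ⟨U, ?_, ?_, rfl⟩
    · intro j
      by_cases hj : j = i
      · subst hj; rw [hU, Function.update_self]; exact hV
      · rw [hU, Function.update_of_ne hj]; exact isOpen_univ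
    · refine h _ ?_
      refine Filter.mem_cofinite.2 ?_
      apply Set.Finite.subset (Set.finite_singleton i)
      intro j hj
      simp only [Set.mem_compl_iff, Set.mem_setOf_eq] at hj
      by_contra hji
      exact hj (by rw [hU, Function.update_of_ne (by simpa using hji)])
end

section
/- Let (X_i)_{i ∈ I} be a family of nonempty non-trivial topological spaces and let 𝓕 be a saturated filter on I. If the product ∏_{i ∈ I} X_i with the 𝓕-topology is compact and Hausdorff, then 𝓕 equals the cofinite filter on I. -/
open Set TopologicalSpace Topology Filter

/-! A saturated filter is finer than the cofinite filter, so the `𝓕`-topology is finer than the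
product topology. If it is compact and Hausdorff, then so are the factors (each embeds as a slice),
hence so is the product topology, and a compact topology finer than a Hausdorff one equals it.
Now if `s ∈ 𝓕` had infinite complement, a box that is proper exactly at the indices outside `s`
would be open in the product topology, which is impossible. -/

theorem TopologicalSpace.eq_of_le_of_compactSpace_of_t2Space {α : Type*}
    {t t' : TopologicalSpace α} (h : t ≤ t') [@CompactSpace α t] [@T2Space α t'] : t = t' := by
  refine le_antisymm h fun s hs => ?_
  have hclosed : IsClosed[t'] (id '' sᶜ) :=
    @Continuous.isClosedMap α α t t' _ _ id (continuous_id_of_le h) sᶜ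
      (@IsOpen.isClosed_compl α t s hs)
  rw [image_id] at hclosed
  exact @isClosed_compl_iff α t' s |>.mp hclosed

theorem finite_setOf_ne_univ_of_isOpen_univ_pi {ι : Type*} {A : ι → Type*}
    [∀ i, TopologicalSpace (A i)] {U : ∀ i, Set (A i)} (hU : IsOpen (pi univ U))
    (hne : (pi univ U).Nonempty) : {i | U i ≠ univ}.Finite := by
  classical
  obtain ⟨f, hf⟩ := hne
  obtain ⟨I, u, hfu, hsub⟩ := isOpen_pi_iff.mp hU f hf
  refine I.finite_toSet.subset fun j hj => ?_
  by_contra hjI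
  refine hj (eq_univ_of_forall fun x => ?_)
  have hupdate : Function.update f j x ∈ (I : Set ι).pi u :=
    update_mem_pi_iff.mpr ⟨fun i hi => (hfu i hi.1).2, fun hj => absurd hj hjI⟩
  simpa using hsub hupdate j (mem_univ j)

namespace FTopology

variable {I : Type*} {X : I → Type*} [∀ i, TopologicalSpace (X i)] {F : Filter I}

theorem isOpen_univ_pi {U : ∀ i, Set (X i)} (hU : ∀ i, IsOpen (U i))
    (hF : {i | U i = univ} ∈ F) : IsOpen[FTopology X F] (pi univ U) :=
  GenerateOpen.basic _ ⟨U, hU, hF, rfl⟩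

theorem le_pi (hsat : ∀ i : I, ({i}ᶜ : Set I) ∈ F) :
    FTopology X F ≤ Pi.topologicalSpace := by
  classical
  refine continuous_id_iff_le.mp
    (@continuous_pi _ _ _ (FTopology X F) _ _ fun j => continuous_def.mpr fun V hV => ?_)
  change IsOpen[FTopology X F] (Function.eval j ⁻¹' V)
  rw [← univ_pi_update_univ]
  refine isOpen_univ_pi (fun i => ?_) (mem_of_superset (hsat j) fun i hi => ?_)
  · rcases eq_or_ne i j with rfl | hij
    · simpa using hV
    · simp [Function.update_of_ne hij]
  · simp [Function.update_of_ne (mem_compl_singleton_iff.mp hi)]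

theorem continuous_update [DecidableEq I] (q : ∀ i, X i) (j : I) :
    Continuous[_, FTopology X F] (Function.update q j) := by
  refine continuous_generateFrom_iff.mpr ?_
  rintro _ ⟨U, hU, -, rfl⟩
  by_cases hq : ∀ i ≠ j, q i ∈ U i
  · rw [update_preimage_univ_pi hq]
    exact hU j
  · push Not at hq
    obtain ⟨i, hij, hi⟩ := hq
    convert isOpen_empty
    refine eq_empty_of_forall_notMem fun y hy => hi ?_
    simpa [Function.update_of_ne hij] using hy i (mem_univ i)

theorem t2Space_factor [∀ i, Nonempty (X i)] [@T2Space (∀ i, X i) (FTopology X F)] (j : I) :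
    T2Space (X j) := by
  classical
  let := FTopology X F
  exact T2Space.of_injective_continuous
    (Function.update_injective (fun i => Classical.arbitrary (X i)) j)
    (FTopology.continuous_update _ j)

end FTopology

/-- If `𝓕` is a saturated filter on `I` and, for a family of nonempty non-trivial
topological spaces, the `𝓕`-topology on the product is compact and Hausdorff,
then `𝓕` is the cofinite filter on `I`. -/
theorem fTopology_compact_t2_cofinite {I : Type*} (X : I → Type*)
    [∀ i, TopologicalSpace (X i)] [∀ i, Nonempty (X i)]
    (hnt : ∀ i, ∃ U : Set (X i), IsOpen U ∧ U ≠ ∅ ∧ U ≠ Set.univ)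
    (F : Filter I) (hsat : ∀ i : I, ({i}ᶜ : Set I) ∈ F)
    (hc : @CompactSpace (∀ i, X i) (FTopology X F))
    (hh : @T2Space (∀ i, X i) (FTopology X F)) :
    F = Filter.cofinite := by
  classical
  have hX : ∀ i, T2Space (X i) := FTopology.t2Space_factor (F := F)
  have hpi : FTopology X F = Pi.topologicalSpace :=
    eq_of_le_of_compactSpace_of_t2Space (FTopology.le_pi hsat)
  refine le_antisymm (le_cofinite_iff_compl_singleton_mem.mpr hsat) fun s hs => ?_
  choose U hUo hUne hUuniv using hnt
  let V : ∀ i, Set (X i) := fun i => if i ∈ s then univ else U i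
  have hV : IsOpen[FTopology X F] (pi univ V) := by
    refine FTopology.isOpen_univ_pi (fun i => ?_) (mem_of_superset hs fun i hi => if_pos hi)
    by_cases hi : i ∈ s <;> simp [V, hi, hUo]
  have hVne : (pi univ V).Nonempty := univ_pi_nonempty_iff.mpr fun i => by
    by_cases hi : i ∈ s <;> simp [V, hi, nonempty_iff_ne_empty, hUne]
  rw [hpi] at hV
  refine (finite_setOf_ne_univ_of_isOpen_univ_pi hV hVne).subset fun i hi => ?_
  simpa [V, notMem_of_mem_compl hi] using hUuniv i
end

section
/- Let 𝓤 be a free (non-principal) ultrafilter on I and let (X_i)_{i ∈ I} be a family of nonempty non-trivial Hausdorff topological spaces. Then the product ∏_{i ∈ I} X_i with the 𝓤-topology is not compact (even if each factor space is compact). -/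
open Set TopologicalSpace Topology Filter

/-- If `𝓤` is a free ultrafilter on `I` (it is not the principal filter of any
subset of `I`) and each `X i` is a nonempty non-trivial Hausdorff space, then the
product with the `𝓤`-topology is not compact. -/
theorem fTopology_free_ultrafilter_not_compact {I : Type*} (X : I → Type*)
    [∀ i, TopologicalSpace (X i)] [∀ i, Nonempty (X i)] [∀ i, T2Space (X i)]
    (hnt : ∀ i, ∃ U : Set (X i), IsOpen U ∧ U ≠ ∅ ∧ U ≠ Set.univ)
    (𝓤 : Ultrafilter I) (hfree : ∀ A : Set I, (𝓤 : Filter I) ≠ Filter.principal A) :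
    ¬ @CompactSpace (∀ i, X i) (FTopology X (𝓤 : Filter I)) := by
  classical
  intro hc
  letI τ : TopologicalSpace (∀ i, X i) := FTopology X (𝓤 : Filter I)
  haveI : CompactSpace (∀ i, X i) := hc
  -- 𝓤 is not pure, so it contains the cofinite filter
  have hnotpure : ∀ a : I, (𝓤 : Filter I) ≠ pure a := by
    intro a h
    exact hfree {a} (h.trans (Filter.principal_singleton a).symm)
  have hcof : (𝓤 : Filter I) ≤ cofinite := by
    rcases 𝓤.le_cofinite_or_eq_pure with h | ⟨a, ha⟩
    · exact h
    · exact absurd (congrArg Ultrafilter.toFilter ha) (hnotpure a)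
  -- I is infinite
  have hInf : Infinite I := by
    rcases finite_or_infinite I with h | h
    · obtain ⟨a, ha⟩ := 𝓤.eq_pure_of_finite
      exact absurd (congrArg Ultrafilter.toFilter ha) (hnotpure a)
    · exact h
  -- choose data in each factor
  choose U hUo hUne hUnu using hnt
  have ha : ∀ i, ∃ x, x ∈ U i := fun i =>
    Set.nonempty_iff_ne_empty.2 (hUne i)
  choose a haU using ha
  have hb : ∀ i, ∃ y, y ∉ U i := by
    intro i
    by_contra h
    push_neg at h
    exact hUnu i (Set.eq_univ_of_forall h)
  choose b hbU using hb
  have hab : ∀ i, a i ≠ b i := fun i h => hbU i (h ▸ haU i)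
  -- open sets W i ∋ b i with a i ∉ W i
  have hW : ∀ i, ∃ W : Set (X i), IsOpen W ∧ b i ∈ W ∧ a i ∉ W := by
    intro i
    obtain ⟨u, v, hu, hv, hbu, hav, huv⟩ := t2_separation (hab i).symm
    exact ⟨u, hu, hbu, fun h => (Set.disjoint_left.1 huv h) hav⟩
  choose W hWo hbW haW using hW
  -- an injection s : ℕ → I whose range is not in 𝓤
  have hs : ∃ s : ℕ → I, Function.Injective s ∧ Set.range s ∉ 𝓤 := by
    have f := Infinite.natEmbedding I
    have hdisj : Set.range (fun n => f (2 * n)) ∩ Set.range (fun n => f (2 * n + 1)) = ∅ := by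
      ext x
      simp only [Set.mem_inter_iff, Set.mem_range, Set.mem_empty_iff_false, iff_false]
      rintro ⟨⟨n, hn⟩, ⟨m, hm⟩⟩
      have := f.injective (hn.trans hm.symm)
      omega
    by_cases h : Set.range (fun n => f (2 * n)) ∈ 𝓤
    · refine ⟨fun n => f (2 * n + 1), fun n m hnm => by have := f.injective hnm; omega, ?_⟩
      intro h'
      have := 𝓤.toFilter.inter_mem h h'
      rw [hdisj] at this
      exact Filter.empty_notMem _ this
    · exact ⟨fun n => f (2 * n), fun n m hnm => by have := f.injective hnm; omega, h⟩
  obtain ⟨s, hsinj, hsU⟩ := hs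
  -- boxes are open
  have hbox : ∀ V : ∀ i, Set (X i), (∀ i, IsOpen (V i)) → {i | V i = Set.univ} ∈ 𝓤 →
      IsOpen (Set.pi Set.univ V) := fun V h1 h2 =>
    TopologicalSpace.GenerateOpen.basic _ ⟨V, h1, h2, rfl⟩
  -- coordinate preimages of opens are open
  have hcoord : ∀ (i : I) (O : Set (X i)), IsOpen O →
      IsOpen (Function.eval i ⁻¹' O) := by
    intro i O hO
    rw [Set.eval_preimage]
    refine hbox _ (fun j => ?_) ?_
    · rcases eq_or_ne j i with rfl | hj
      · rw [Function.update_self]; exact hO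
      · rw [Function.update_of_ne hj]; exact isOpen_univ
    · have hsing : ({i}ᶜ : Set I) ∈ (𝓤 : Filter I) := by
        apply hcof
        rw [Filter.mem_cofinite, compl_compl]
        exact Set.finite_singleton i
      refine Filter.mem_of_superset hsing ?_
      intro j hj
      have : j ≠ i := by simpa using hj
      simp [Function.update_of_ne this]
  -- the closed sets
  set D : ℕ → Set (∀ i, X i) := fun n => {x | ∀ k ≤ n, x (s k) = b (s k)} with hD
  set V : ∀ i, Set (X i) := fun i => if i ∈ Set.range s then W i else Set.univ with hV
  have hVopen : IsOpen (Set.pi Set.univ V) := by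
    refine hbox _ (fun i => ?_) ?_
    · rcases em (i ∈ Set.range s) with h | h
      · simp only [hV, if_pos h]; exact hWo i
      · simp only [hV, if_neg h]; exact isOpen_univ
    · refine Filter.mem_of_superset ((𝓤.compl_mem_iff_notMem).2 hsU) ?_
      intro i hi
      simp only [hV, Set.mem_setOf_eq, if_neg hi]
  set E : Set (∀ i, X i) := (Set.pi Set.univ V)ᶜ with hE
  have hEclosed : IsClosed E := hVopen.isClosed_compl
  have hDclosed : ∀ n, IsClosed (D n) := by
    intro n
    have : D n = ⋂ k ∈ Finset.range (n + 1), Function.eval (s k) ⁻¹' {b (s k)} := by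
      ext x
      simp only [hD, Set.mem_setOf_eq, Set.mem_iInter, Finset.mem_range,
        Set.mem_preimage, Set.mem_singleton_iff, Function.eval]
      constructor
      · intro h k hk; exact h k (by omega)
      · intro h k hk; exact h k (by omega)
    rw [this]
    refine isClosed_biInter fun k _ => ?_
    rw [← isOpen_compl_iff, ← Set.preimage_compl]
    exact hcoord _ _ (isClosed_singleton.isOpen_compl)
  -- family indexed by Option ℕ
  set t : Option ℕ → Set (∀ i, X i) := fun o => o.elim E D with ht
  have htc : ∀ o, IsClosed (t o) := by
    rintro (_ | n)
    · exact hEclosed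
    · exact hDclosed n
  have hfip : ∀ u : Finset (Option ℕ), (Set.univ ∩ ⋂ o ∈ u, t o).Nonempty := by
    intro u
    obtain ⟨N, hN⟩ : ∃ N : ℕ, ∀ n : ℕ, some n ∈ u → n ≤ N := by
      rcases u.image (fun o => o.getD 0) |>.exists_le with ⟨N, hN⟩
      exact ⟨N, fun n hn => hN _ (Finset.mem_image.2 ⟨some n, hn, rfl⟩)⟩
    refine ⟨fun i => if ∃ k ≤ N, s k = i then b i else a i, Set.mem_univ _, ?_⟩
    rw [Set.mem_iInter₂]
    rintro (_ | n) ho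
    · -- membership in E
      simp only [ht, Option.elim, hE, Set.mem_compl_iff, Set.mem_univ_pi, not_forall]
      refine ⟨s (N + 1), ?_⟩
      have h1 : ¬ ∃ k ≤ N, s k = s (N + 1) := by
        rintro ⟨k, hk, hks⟩
        have := hsinj hks
        omega
      rw [if_neg h1]
      have h2 : s (N + 1) ∈ Set.range s := ⟨N + 1, rfl⟩
      simp only [hV, if_pos h2]
      exact haW _
    · -- membership in D n
      intro k hk
      have : ∃ k' ≤ N, s k' = s k := ⟨k, le_trans hk (hN n ho), rfl⟩
      simp only [if_pos this]
  have := (isCompact_univ (X := ∀ i, X i)).inter_iInter_nonempty t htc hfip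
  obtain ⟨x, -, hx⟩ := this
  rw [Set.mem_iInter] at hx
  have hxE : x ∈ E := hx none
  have hxb : ∀ k : ℕ, x (s k) = b (s k) := fun k => (hx (some k)) k le_rfl
  refine hxE ?_
  intro i _
  rcases em (i ∈ Set.range s) with ⟨k, rfl⟩ | h
  · simp only [hV, if_pos (Set.mem_range_self k), hxb k]
    exact hbW _
  · simp only [hV, if_neg h, Set.mem_univ]
end

section
/- Let (X_i)_{i ∈ I} be a family of T1 topological spaces with |X_i| ≥ 2 for every i, and let 𝓕 be a saturated filter on I that is different from the cofinite filter, i.e., there exists F ∈ 𝓕 whose complement I \ F is infinite. Then the product ∏_{i ∈ I} X_i with the 𝓕-topology is not compact. -/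
open Set TopologicalSpace Topology Filter

/-- If each `X i` is a T1 space with at least two points and `𝓕` is a saturated
filter on `I` different from the cofinite filter (some member of `𝓕` has infinite
complement), then the `𝓕`-topology on the product is not compact. -/
theorem fTopology_saturated_ne_cofinite_not_compact {I : Type*} (X : I → Type*)
    [∀ i, TopologicalSpace (X i)] [∀ i, T1Space (X i)] [∀ i, Nontrivial (X i)]
    (F : Filter I) (hsat : ∀ i : I, ({i}ᶜ : Set I) ∈ F)
    (hne : ∃ s ∈ F, (sᶜ : Set I).Infinite) :
    ¬ @CompactSpace (∀ i, X i) (FTopology X F) := by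
  classical
  letI := FTopology X F
  intro h
  obtain ⟨s, hs, hA⟩ := hne
  -- two distinct points in each factor
  have hab : ∀ i, ∃ p : X i × X i, p.1 ≠ p.2 := fun i => by
    obtain ⟨u, v, huv⟩ := exists_pair_ne (X i); exact ⟨(u, v), huv⟩
  choose p hp using hab
  set a : ∀ i, X i := fun i => (p i).1 with ha
  set b : ∀ i, X i := fun i => (p i).2 with hb
  have hab' : ∀ i, a i ≠ b i := hp
  -- embedding of ℕ into sᶜ
  let f : ℕ ↪ (sᶜ : Set I) := hA.natEmbedding
  let e : ℕ → I := fun n => (f n : I)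
  have he : Function.Injective e := fun n m hnm =>
    f.injective (Subtype.ext hnm)
  have heA : ∀ n, e n ∉ s := fun n => (f n).2
  -- the cover
  let U : ℕ ⊕ ℕ → Set (∀ i, X i) := fun j =>
    match j with
    | Sum.inl n => {x | ∀ m, n ≤ m → x (e m) ≠ b (e m)}
    | Sum.inr k => {x | x (e k) ≠ a (e k)}
  have hUopen : ∀ j, IsOpen (U j) := by
    rintro (n | k)
    · apply TopologicalSpace.GenerateOpen.basic
      refine ⟨fun i => if ∃ m, n ≤ m ∧ e m = i then {b i}ᶜ else univ, fun i => ?_, ?_, ?_⟩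
      · dsimp only
        by_cases hc : ∃ m, n ≤ m ∧ e m = i
        · rw [if_pos hc]; exact isOpen_compl_singleton
        · rw [if_neg hc]; exact isOpen_univ
      · refine Filter.mem_of_superset hs fun i hi => ?_
        have hc : ¬ ∃ m, n ≤ m ∧ e m = i := by
          rintro ⟨m, -, rfl⟩; exact heA m hi
        simp only [Set.mem_setOf_eq, if_neg hc]
      · ext x
        constructor
        · intro hx
          have hx' : ∀ m, n ≤ m → x (e m) ≠ b (e m) := hx
          rw [Set.mem_pi]
          intro i _
          by_cases hc : ∃ m, n ≤ m ∧ e m = i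
          · obtain ⟨m, hm, rfl⟩ := hc
            rw [if_pos ⟨m, hm, rfl⟩]
            exact hx' m hm
          · rw [if_neg hc]; exact Set.mem_univ _
        · intro hx
          show ∀ m, n ≤ m → x (e m) ≠ b (e m)
          intro m hm
          have := Set.mem_pi.1 hx (e m) (Set.mem_univ _)
          rw [if_pos ⟨m, hm, rfl⟩] at this
          exact this
    · apply TopologicalSpace.GenerateOpen.basic
      refine ⟨fun i => if i = e k then {a i}ᶜ else univ, fun i => ?_, ?_, ?_⟩
      · dsimp only
        by_cases hc : i = e k
        · rw [if_pos hc]; exact isOpen_compl_singleton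
        · rw [if_neg hc]; exact isOpen_univ
      · refine Filter.mem_of_superset (hsat (e k)) fun i hi => ?_
        simp only [Set.mem_compl_iff, Set.mem_singleton_iff] at hi
        simp only [Set.mem_setOf_eq, if_neg hi]
      · ext x
        constructor
        · intro hx
          have hx' : x (e k) ≠ a (e k) := hx
          rw [Set.mem_pi]
          intro i _
          by_cases hc : i = e k
          · subst hc; rw [if_pos rfl]; exact hx'
          · rw [if_neg hc]; exact Set.mem_univ _
        · intro hx
          show x (e k) ≠ a (e k)
          have := Set.mem_pi.1 hx (e k) (Set.mem_univ _)
          rw [if_pos rfl] at this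
          exact this
  have hcover : (Set.univ : Set (∀ i, X i)) ⊆ ⋃ j, U j := by
    intro x _
    by_cases hx : ∃ n, ∀ m, n ≤ m → x (e m) ≠ b (e m)
    · obtain ⟨n, hn⟩ := hx
      exact Set.mem_iUnion.2 ⟨Sum.inl n, hn⟩
    · push_neg at hx
      obtain ⟨m, -, hm⟩ := hx 0
      refine Set.mem_iUnion.2 ⟨Sum.inr m, ?_⟩
      simp only [U, Set.mem_setOf_eq, hm]
      exact (hab' (e m)).symm
  obtain ⟨t, ht⟩ := h.isCompact_univ.elim_finite_subcover U hUopen hcover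
  -- extract the finite set of "inr" indices
  let T : Finset ℕ := t.biUnion fun j =>
    match j with
    | Sum.inl _ => ∅
    | Sum.inr k => {k}
  have hT : ∀ k, Sum.inr k ∈ t → k ∈ T := by
    intro k hk
    exact Finset.mem_biUnion.2 ⟨Sum.inr k, hk, by simp⟩
  -- the escaping point
  let x : ∀ i, X i := fun i =>
    if h : ∃ k, e k = i then (if Classical.choose h ∈ T then a i else b i) else a i
  have hxe : ∀ k, x (e k) = if k ∈ T then a (e k) else b (e k) := by
    intro k
    have hex : ∃ m, e m = e k := ⟨k, rfl⟩
    have : Classical.choose hex = k := he (Classical.choose_spec hex)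
    simp only [x, dif_pos hex, this]
  obtain ⟨j, hjt, hjx⟩ := Set.mem_iUnion₂.1 (ht (Set.mem_univ x))
  match j with
  | Sum.inl n =>
      have hm : n ≤ max n (T.sup id + 1) := le_max_left _ _
      set m := max n (T.sup id + 1) with hmdef
      have hmT : m ∉ T := by
        intro hmem
        have h1 : m ≤ T.sup id := Finset.le_sup (f := id) hmem
        have h2 : T.sup id + 1 ≤ m := le_max_right _ _
        omega
      have := hjx m hm
      rw [hxe m, if_neg hmT] at this
      exact this rfl
  | Sum.inr k =>
      have hk : k ∈ T := hT k hjt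
      have : x (e k) ≠ a (e k) := hjx
      rw [hxe k, if_pos hk] at this
      exact this rfl
end

section
/- Let (X_i)_{i ∈ I} be a family of topological spaces, 𝓕 a filter on I, and x = (x_i) a point of X = ∏_{i ∈ I} X_i. Then the equalizer Σ^𝓕(x) = {z ∈ X : {i ∈ I : z_i = x_i} ∈ 𝓕} is dense in X with the 𝓕-topology. -/
open Set TopologicalSpace Topology Filter

theorem FTopology_isBasis {I : Type*} (X : I → Type*) [∀ i, TopologicalSpace (X i)]
    (F : Filter I) :
    @TopologicalSpace.IsTopologicalBasis (∀ i, X i) (FTopology X F)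
      {S | ∃ U : ∀ i, Set (X i), (∀ i, IsOpen (U i)) ∧ {i | U i = Set.univ} ∈ F ∧
        S = Set.pi Set.univ U} := by
  letI := FTopology X F
  refine ⟨?_, ?_, rfl⟩
  · rintro t₁ ⟨U, hU, hUF, rfl⟩ t₂ ⟨V, hV, hVF, rfl⟩ a ⟨ha1, ha2⟩
    refine ⟨Set.pi Set.univ (fun i => U i ∩ V i),
      ⟨fun i => U i ∩ V i, fun i => (hU i).inter (hV i), ?_, rfl⟩, ?_, ?_⟩
    · filter_upwards [hUF, hVF] with i h1 h2
      show U i ∩ V i = Set.univ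
      rw [h1, h2, Set.univ_inter]
    · exact fun i _ => ⟨ha1 i trivial, ha2 i trivial⟩
    · exact fun b hb => ⟨fun i _ => (hb i trivial).1, fun i _ => (hb i trivial).2⟩
  · apply Set.eq_univ_of_univ_subset
    rintro a -
    refine Set.mem_sUnion.2 ⟨Set.univ, ⟨fun _ => Set.univ, fun _ => isOpen_univ, by simp, by simp⟩, trivial⟩

/-- For any filter `𝓕` on `I` and any point `x` of the product, the equalizer
`Σ^𝓕(x) = {z | {i | z i = x i} ∈ 𝓕}` is dense in the `𝓕`-topology. -/
theorem equalizer_dense {I : Type*} (X : I → Type*)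
    [∀ i, TopologicalSpace (X i)] (F : Filter I) (x : ∀ i, X i) :
    @Dense (∀ i, X i) (FTopology X F) {z : ∀ i, X i | {i | z i = x i} ∈ F} := by
  letI := FTopology X F
  classical
  rw [dense_iff_inter_open]
  intro O hO ⟨a, ha⟩
  obtain ⟨B, ⟨U, hU, hUF, rfl⟩, haB, hBO⟩ :=
    (FTopology_isBasis X F).exists_subset_of_mem_open ha hO
  set z : ∀ i, X i := fun i => if U i = Set.univ then x i else a i with hz
  refine ⟨z, hBO ?_, ?_⟩
  · intro i _
    by_cases h : U i = Set.univ
    · simp [hz, h]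
    · simpa [hz, h] using haB i trivial
  · exact Filter.mem_of_superset hUF fun i h => by show (if U i = Set.univ then x i else a i) = x i; exact if_pos h
end

section
/- Let (X_i)_{i ∈ I} be a family of topological spaces each having at least two points, with I nonempty, and let 𝓕 be a proper filter on I (∅ ∉ 𝓕). Then the product ∏_{i ∈ I} X_i with the 𝓕-topology is resolvable: there exist two disjoint subsets of ∏_{i ∈ I} X_i, each dense in the 𝓕-topology. -/
open Set TopologicalSpace Topology Filter

namespace FTopology

variable {I : Type*} (X : I → Type*) [∀ i, TopologicalSpace (X i)] (F : Filter I)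

def boxes : Set (Set (∀ i, X i)) :=
  {S | ∃ U : ∀ i, Set (X i), (∀ i, IsOpen (U i)) ∧ {i | U i = univ} ∈ F ∧ S = univ.pi U}

theorem isTopologicalBasis_boxes : @IsTopologicalBasis _ (FTopology X F) (boxes X F) := by
  let := FTopology X F
  refine ⟨?_, ?_, rfl⟩
  · rintro _ ⟨U, hUo, hUF, rfl⟩ _ ⟨V, hVo, hVF, rfl⟩ x hx
    refine ⟨univ.pi fun i => U i ∩ V i,
      ⟨fun i => U i ∩ V i, fun i => (hUo i).inter (hVo i), ?_, rfl⟩,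
      by rwa [pi_inter_distrib], by rw [pi_inter_distrib]⟩
    filter_upwards [hUF, hVF] with i hU hV
    simp [hU, hV]
  · exact sUnion_eq_univ_iff.2 fun x =>
      ⟨univ, ⟨fun _ => univ, fun _ => isOpen_univ, by simp, by simp⟩, trivial⟩

theorem dense_setOf_eventually_eq (c : ∀ i, X i) :
    @Dense _ (FTopology X F) {f | ∀ᶠ i in F, f i = c i} := by
  classical
  let := FTopology X F
  refine (isTopologicalBasis_boxes X F).dense_iff.2 ?_
  rintro _ ⟨U, -, hUF, rfl⟩ ⟨x, hx⟩
  refine ⟨{i | U i = univ}.piecewise c x, fun i _ => ?_, ?_⟩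
  · by_cases hi : U i = univ
    · simp [hi]
    · rw [piecewise_eq_of_notMem (s := {i | U i = univ}) _ _ hi]
      exact hx i trivial
  · filter_upwards [hUF] with i hi using piecewise_eq_of_mem _ _ _ hi

end FTopology

theorem Filter.disjoint_setOf_eventually_eq {I : Type*} {X : I → Type*} {F : Filter I} [F.NeBot]
    {a b : ∀ i, X i} (hab : ∀ i, a i ≠ b i) :
    Disjoint {f : ∀ i, X i | ∀ᶠ i in F, f i = a i} {f | ∀ᶠ i in F, f i = b i} :=
  disjoint_left.2 fun _ ha hb =>
    let ⟨i, hai, hbi⟩ := (ha.and hb).exists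
    hab i (hai.symm.trans hbi)

theorem fTopology_resolvable_general {I : Type*} (X : I → Type*)
    [∀ i, TopologicalSpace (X i)] [∀ i, Nontrivial (X i)]
    (F : Filter I) (hproper : (∅ : Set I) ∉ F) :
    ∃ D E : Set (∀ i, X i), Disjoint D E ∧
      @Dense (∀ i, X i) (FTopology X F) D ∧ @Dense (∀ i, X i) (FTopology X F) E := by
  have : F.NeBot := ⟨fun h => hproper (empty_mem_iff_bot.2 h)⟩
  choose a b hab using fun i => exists_pair_ne (X i)
  exact ⟨_, _, disjoint_setOf_eventually_eq hab,
    FTopology.dense_setOf_eventually_eq X F a, FTopology.dense_setOf_eventually_eq X F b⟩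

/-- If `I` is nonempty, each `X i` has at least two points, and `𝓕` is a proper
filter on `I` (`∅ ∉ 𝓕`), then the product with the `𝓕`-topology is resolvable:
it has two disjoint subsets, each dense in the `𝓕`-topology. -/
theorem fTopology_resolvable {I : Type*} [Nonempty I] (X : I → Type*)
    [∀ i, TopologicalSpace (X i)] [∀ i, Nontrivial (X i)]
    (F : Filter I) (hproper : (∅ : Set I) ∉ F) :
    ∃ D E : Set (∀ i, X i), Disjoint D E ∧
      @Dense (∀ i, X i) (FTopology X F) D ∧ @Dense (∀ i, X i) (FTopology X F) E :=
  fTopology_resolvable_general X F hproper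
end

section
/- Let (X_i)_{i ∈ I} be a family of sets, for each i let 𝓕_i be a proper filter on X_i all of whose members are nonempty, and let 𝓕 be a saturated filter on I. Then for every i ∈ I, the image of the 𝓕-filter ∏^𝓕 𝓕_i under the projection p_i : ∏_{j ∈ I} X_j → X_i is exactly 𝓕_i, i.e., p_i(∏^𝓕 𝓕_j) = 𝓕_i. -/
open Set Filter

/-- The collection of boxes `∏ i, B i` with `B i ∈ 𝓕ᵢ` for all `i` and
distinguished index set `{i | B i = univ}` in `F`. -/
def filterBoxes {I : Type*} {X : I → Type*} (Fi : ∀ i, Filter (X i))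
    (F : Filter I) : Set (Set (∀ i, X i)) :=
  {S | ∃ B : ∀ i, Set (X i), (∀ i, B i ∈ Fi i) ∧ {i | B i = Set.univ} ∈ F ∧
    S = Set.pi Set.univ B}

/-- The `𝓕`-filter on `∏ i, X i`: the filter generated by the boxes `∏ i, B i`
with `B i ∈ 𝓕ᵢ` for all `i` and distinguished index set in `𝓕`. -/
def FFilter {I : Type*} {X : I → Type*} (Fi : ∀ i, Filter (X i))
    (F : Filter I) : Filter (∀ i, X i) :=
  Filter.generate (filterBoxes Fi F)

/-- If each `𝓕ᵢ` is a proper filter all of whose members are nonempty and `𝓕` is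
a saturated filter on `I` (`I \ {i} ∈ 𝓕` for all `i`), then the image of the
`𝓕`-filter under each projection `p i` is exactly `𝓕ᵢ`. -/
theorem fFilter_map_proj {I : Type*} (X : I → Type*)
    (Fi : ∀ i, Filter (X i)) (hne : ∀ i, ∀ s ∈ Fi i, s.Nonempty)
    (F : Filter I) (hsat : ∀ i : I, ({i}ᶜ : Set I) ∈ F) :
    ∀ i : I, Filter.map (fun f : ∀ j, X j => f i) (FFilter Fi F) = Fi i := by
  classical
  intro i
  ext t
  simp only [Filter.mem_map]
  constructor
  · intro ht
    rw [FFilter, Filter.mem_generate_iff] at ht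
    obtain ⟨T, hTsub, hTfin, hTinter⟩ := ht
    choose! B hB1 hB2 hB3 using fun S (hS : S ∈ T) => hTsub hS
    set C : ∀ j, Set (X j) := fun j => ⋂ S ∈ T, B S j with hC
    have hCmem : ∀ j, C j ∈ Fi j := fun j =>
      (Filter.biInter_mem hTfin).2 fun S hS => hB1 S hS j
    have hCne : ∀ j, (C j).Nonempty := fun j => hne j _ (hCmem j)
    choose g hg using hCne
    refine Filter.mem_of_superset (hCmem i) ?_
    intro x hx
    set f : ∀ j, X j := Function.update g i x with hf
    have hfS : f ∈ ⋂₀ T := by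
      intro S hS
      rw [hB3 S hS]
      intro j _
      rcases eq_or_ne j i with rfl | hne'
      · have : f j = x := Function.update_self j x g
        rw [this]
        exact Set.mem_iInter₂.mp hx S hS
      · have : f j = g j := Function.update_of_ne hne' x g
        rw [this]
        exact Set.mem_iInter₂.mp (hg j) S hS
    have := hTinter hfS
    simpa [hf, Function.update_self] using this
  · intro ht
    set B : ∀ j, Set (X j) := Function.update (fun j => (Set.univ : Set (X j))) i t
      with hBdef
    have hbox : Set.pi Set.univ B ∈ filterBoxes Fi F := by
      refine ⟨B, fun j => ?_, ?_, rfl⟩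
      · rcases eq_or_ne j i with rfl | hne'
        · simpa [hBdef] using ht
        · simp [hBdef, Function.update_of_ne hne']
      · refine F.mem_of_superset (hsat i) fun j hj => ?_
        have : j ≠ i := hj
        simp [hBdef, Function.update_of_ne this]
    refine Filter.mem_of_superset (Filter.mem_generate_of_mem hbox) ?_
    intro f hf
    have := hf i (Set.mem_univ i)
    simpa [hBdef] using this
end

section
/- Let ((X_i, 𝒰_i))_{i ∈ I} be a family of uniform spaces and let 𝓕 be a filter on I. Identify (∏_{i ∈ I} X_i) × (∏_{i ∈ I} X_i) with ∏_{i ∈ I} (X_i × X_i). Then the collection of boxes ∏_{i ∈ I} B_i with B_i ∈ 𝒰_i for all i and {i ∈ I : B_i = X_i × X_i} ∈ 𝓕 is a base for a uniformity on ∏_{i ∈ I} X_i: each such box contains the diagonal, for each such box U there is such a box V with V ⊆ U⁻¹ and such a box W with W ∘ W ⊆ U, and any two such boxes contain a common such box; hence there is a uniform space structure on ∏_{i ∈ I} X_i whose uniformity filter is generated by these boxes. -/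
open Set Filter Uniformity

/-! The operations behind the uniformity axioms (inverse, halving, intersection) act on boxes
coordinatewise and can be chosen to send `univ` to `univ` (halve `univ` by `univ` itself), so the
distinguished index set only grows and stays in `F`. Being directed, the boxes form a filter basis,
whose filter is the one they generate. -/

/-- The boxes of entourages: subsets of `(∏ i, X i) × (∏ i, X i)` corresponding,
under the identification with `∏ i, (X i × X i)`, to products `∏ i, B i` with
`B i ∈ 𝓤 (X i)` for all `i` and distinguished index set
`{i | B i = univ}` in `F`. -/
def uniformBoxes {I : Type*} (X : I → Type*) [∀ i, UniformSpace (X i)]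
    (F : Filter I) : Set (Set ((∀ i, X i) × (∀ i, X i))) :=
  {S | ∃ B : ∀ i, Set (X i × X i), (∀ i, B i ∈ 𝓤 (X i)) ∧
    {i | B i = Set.univ} ∈ F ∧ S = {p | ∀ i, (p.1 i, p.2 i) ∈ B i}}

namespace UniformBoxes

open scoped SetRel

variable {I : Type*} {X : I → Type*} [∀ i, UniformSpace (X i)] {F : Filter I}

def boxRel (B : ∀ i, Set (X i × X i)) : Set ((∀ i, X i) × (∀ i, X i)) :=
  {p | ∀ i, (p.1 i, p.2 i) ∈ B i}

lemma boxRel_mem_of_univ_imp {B D : ∀ i, Set (X i × X i)} (hD : ∀ i, D i ∈ 𝓤 (X i))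
    (hB : {i | B i = univ} ∈ F) (hBD : ∀ i, B i = univ → D i = univ) :
    boxRel D ∈ uniformBoxes X F :=
  ⟨D, hD, mem_of_superset hB hBD, rfl⟩

lemma univ_mem : (univ : Set ((∀ i, X i) × (∀ i, X i))) ∈ uniformBoxes X F :=
  ⟨fun _ => univ, fun _ => Filter.univ_mem, by simp, by simp⟩

lemma id_subset {S : Set ((∀ i, X i) × (∀ i, X i))} (hS : S ∈ uniformBoxes X F) :
    SetRel.id ⊆ S := by
  obtain ⟨B, hB, -, rfl⟩ := hS
  rintro ⟨x, _⟩ rfl i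
  exact refl_mem_uniformity (hB i)

lemma exists_subset_swap {S : Set ((∀ i, X i) × (∀ i, X i))} (hS : S ∈ uniformBoxes X F) :
    ∃ V ∈ uniformBoxes X F, V ⊆ Prod.swap ⁻¹' S := by
  obtain ⟨B, hB, hF, rfl⟩ := hS
  refine ⟨boxRel fun i => Prod.swap ⁻¹' B i,
    boxRel_mem_of_univ_imp (fun i => tendsto_swap_uniformity (hB i)) hF ?_, fun _ hp => hp⟩
  intro i hi
  rw [hi, preimage_univ]

lemma exists_comp_subset {S : Set ((∀ i, X i) × (∀ i, X i))} (hS : S ∈ uniformBoxes X F) :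
    ∃ W ∈ uniformBoxes X F, W ○ W ⊆ S := by
  classical
  obtain ⟨B, hB, hF, rfl⟩ := hS
  choose C hC hCB using fun i => comp_mem_uniformity_sets (hB i)
  let D : ∀ i, Set (X i × X i) := fun i => if B i = univ then univ else C i
  have hD : ∀ i, D i ∈ 𝓤 (X i) ∧ D i ○ D i ⊆ B i := fun i => by
    by_cases h : B i = univ
    · simp [D, h]
    · simpa [D, h] using ⟨hC i, hCB i⟩
  refine ⟨boxRel D, boxRel_mem_of_univ_imp (fun i => (hD i).1) hF fun i hi => if_pos hi, ?_⟩
  rintro ⟨x, z⟩ ⟨y, hxy, hyz⟩ i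
  exact (hD i).2 ⟨y i, hxy i, hyz i⟩

lemma exists_subset_inter {S T : Set ((∀ i, X i) × (∀ i, X i))} (hS : S ∈ uniformBoxes X F)
    (hT : T ∈ uniformBoxes X F) : ∃ W ∈ uniformBoxes X F, W ⊆ S ∩ T := by
  obtain ⟨B, hB, hBF, rfl⟩ := hS
  obtain ⟨C, hC, hCF, rfl⟩ := hT
  refine ⟨boxRel fun i => B i ∩ C i,
    ⟨_, fun i => inter_mem (hB i) (hC i), mem_of_superset (inter_mem hBF hCF) ?_, rfl⟩,
    fun _ hp => ⟨fun i => (hp i).1, fun i => (hp i).2⟩⟩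
  rintro i ⟨hBi, hCi⟩
  simp only [mem_ofPred_eq] at hBi hCi ⊢
  rw [hBi, hCi, univ_inter]

variable (X F) in
def filterBasis : FilterBasis ((∀ i, X i) × (∀ i, X i)) where
  sets := uniformBoxes X F
  nonempty := ⟨univ, univ_mem⟩
  inter_sets := exists_subset_inter

end UniformBoxes

open UniformBoxes in
/-- For a family of uniform spaces and a filter `𝓕` on `I`, the boxes of
entourages with distinguished index set in `𝓕` form a base for a uniformity on
`∏ i, X i`: each box contains the diagonal, each box contains (the inverse of) a
box, each box contains the composition square of a box, any two boxes contain a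
common box, and hence there is a uniform space structure on the product whose
uniformity filter is generated by these boxes. -/
theorem uniformBoxes_isBase {I : Type*} (X : I → Type*) [∀ i, UniformSpace (X i)]
    (F : Filter I) :
    (∀ S ∈ uniformBoxes X F, SetRel.id ⊆ S) ∧
    (∀ S ∈ uniformBoxes X F, ∃ V ∈ uniformBoxes X F, V ⊆ Prod.swap ⁻¹' S) ∧
    (∀ S ∈ uniformBoxes X F, ∃ W ∈ uniformBoxes X F, SetRel.comp W W ⊆ S) ∧
    (∀ S ∈ uniformBoxes X F, ∀ T ∈ uniformBoxes X F,
      ∃ W ∈ uniformBoxes X F, W ⊆ S ∩ T) ∧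
    (∃ u : UniformSpace (∀ i, X i),
      @uniformity (∀ i, X i) u = Filter.generate (uniformBoxes X F)) :=
  ⟨fun _ => id_subset, fun _ => exists_subset_swap, fun _ => exists_comp_subset,
    fun _ hS _ hT => exists_subset_inter hS hT,
    .ofCore (.mkOfBasis (filterBasis X F) (fun _ hS _ => id_subset hS rfl)
      (fun _ => exists_subset_swap) (fun _ => exists_comp_subset)),
    (FilterBasis.generate (filterBasis X F)).symm⟩
end

section
/- Let ((X_i, 𝒰_i))_{i ∈ I} be a family of uniform spaces and let 𝓕 be a filter on I. The topology on ∏_{i ∈ I} X_i induced by the 𝓕-uniformity (a set G is open iff for every x ∈ G there is an entourage U of the 𝓕-uniformity with U[x] = {y : (x,y) ∈ U} ⊆ G) coincides with the 𝓕-topology on ∏_{i ∈ I} X_i obtained from the uniform topologies of the factor spaces X_i. -/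
open Set TopologicalSpace Topology Filter Uniformity

/-- The `𝓕`-uniformity filter on `(∏ i, X i) × (∏ i, X i)`: the filter generated
by the boxes of entourages `∏ i, B i` (under the identification with
`∏ i, (X i × X i)`) with `B i ∈ 𝓤 (X i)` for all `i` and distinguished index set
`{i | B i = univ}` in `F`. -/
def FUniformity {I : Type*} (X : I → Type*) [∀ i, UniformSpace (X i)]
    (F : Filter I) : Filter ((∀ i, X i) × (∀ i, X i)) :=
  Filter.generate
    {S | ∃ B : ∀ i, Set (X i × X i), (∀ i, B i ∈ 𝓤 (X i)) ∧
      {i | B i = Set.univ} ∈ F ∧ S = {p | ∀ i, (p.1 i, p.2 i) ∈ B i}}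

/-!
The sets open for the `𝓕`-uniformity are those of
`mkOfNhds fun x ↦ comap (Prod.mk x) (FUniformity X F)`, so it suffices to compare two
topologies. Every open box with distinguished indices in `𝓕` contains around each of its
points the ball of an entourage box, obtained by choosing factor entourages and taking `univ`
wherever the box is `univ`. Conversely, the ball around `x` of an entourage box `∏ B i`
contains the open box `∏ interior (B i)[x i]`, whose distinguished indices contain those of `B`.
-/

theorem exists_mem_uniformity_ball_subset {α : Type*} [UniformSpace α] {a : α} {U : Set α}
    (hU : U ∈ 𝓝 a) :
    ∃ B ∈ 𝓤 α, (U = univ → B = univ) ∧ UniformSpace.ball a B ⊆ U := by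
  by_cases h : U = univ
  · exact ⟨univ, univ_mem, fun _ => rfl, h ▸ subset_univ _⟩
  · obtain ⟨B, hB, hBU⟩ := UniformSpace.mem_nhds_iff.1 hU
    exact ⟨B, hB, fun h' => absurd h' h, hBU⟩

section

variable {I : Type*} (X : I → Type*) (F : Filter I)

theorem isOpen_fTopology_pi [∀ i, TopologicalSpace (X i)] {U : ∀ i, Set (X i)}
    (hU : ∀ i, IsOpen (U i)) (hF : {i | U i = univ} ∈ F) :
    IsOpen[FTopology X F] (pi univ U) :=
  isOpen_generateFrom_of_mem ⟨U, hU, hF, rfl⟩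

variable [∀ i, UniformSpace (X i)]

theorem setOf_forall_mem_mem_fUniformity {B : ∀ i, Set (X i × X i)} (hB : ∀ i, B i ∈ 𝓤 (X i))
    (hF : {i | B i = univ} ∈ F) :
    {p : (∀ i, X i) × (∀ i, X i) | ∀ i, (p.1 i, p.2 i) ∈ B i} ∈ FUniformity X F :=
  mem_generate_of_mem ⟨B, hB, hF, rfl⟩

abbrev fUniformityTopology : TopologicalSpace (∀ i, X i) :=
  TopologicalSpace.mkOfNhds fun x => comap (Prod.mk x) (FUniformity X F)

theorem isOpen_fUniformityTopology_iff {G : Set (∀ i, X i)} :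
    IsOpen[fUniformityTopology X F] G ↔
      ∀ x ∈ G, ∃ U ∈ FUniformity X F, {y | (x, y) ∈ U} ⊆ G :=
  forall₂_congr fun _ _ => mem_comap

theorem fUniformityTopology_le_fTopology : fUniformityTopology X F ≤ FTopology X F := by
  rw [FTopology, le_generateFrom_iff_subset_isOpen]
  rintro _ ⟨U, hU, hF, rfl⟩
  refine (isOpen_fUniformityTopology_iff X F).2 fun x hx => ?_
  choose B hB hBuniv hball using fun i =>
    exists_mem_uniformity_ball_subset ((hU i).mem_nhds (hx i trivial))
  exact ⟨_, setOf_forall_mem_mem_fUniformity X F hB (mem_of_superset hF hBuniv),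
    fun y hy i _ => hball i (hy i)⟩

theorem tendsto_prodMk_nhds_fTopology_fUniformity (x : ∀ i, X i) :
    Tendsto (Prod.mk x) (@nhds _ (FTopology X F) x) (FUniformity X F) := by
  rw [Tendsto, FUniformity, le_generate_iff]
  rintro _ ⟨B, hB, hF, rfl⟩
  have hbox : IsOpen[FTopology X F] (pi univ fun i => interior (UniformSpace.ball (x i) (B i))) :=
    isOpen_fTopology_pi X F (fun i => isOpen_interior) <| mem_of_superset hF fun i hi => by
      simp [show B i = univ from hi, UniformSpace.ball]
  refine mem_map.2 <| mem_of_superset (@IsOpen.mem_nhds _ (FTopology X F) _ _ hbox fun i _ => ?_)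
    fun y hy i => (interior_subset (hy i trivial) : y i ∈ UniformSpace.ball (x i) (B i))
  exact mem_interior_iff_mem_nhds.2 (UniformSpace.ball_mem_nhds _ (hB i))

theorem fTopology_le_fUniformityTopology : FTopology X F ≤ fUniformityTopology X F :=
  fun G hG => @isOpen_iff_mem_nhds _ (FTopology X F) G |>.2 fun x hx =>
    (tendsto_prodMk_nhds_fTopology_fUniformity X F x).le_comap (hG x hx)

end

/-- The topology induced on `∏ i, X i` by the `𝓕`-uniformity (a set `G` is open
iff around every `x ∈ G` it contains the ball `U[x]` of some entourage `U` of the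
`𝓕`-uniformity) coincides with the `𝓕`-topology obtained from the uniform
topologies of the factors. -/
theorem fUniformity_topology_eq_fTopology {I : Type*} (X : I → Type*)
    [∀ i, UniformSpace (X i)] (F : Filter I) :
    ∀ G : Set (∀ i, X i),
      (∀ x ∈ G, ∃ U ∈ FUniformity X F, {y | (x, y) ∈ U} ⊆ G) ↔
        IsOpen[FTopology X F] G := by
  intro G
  rw [← isOpen_fUniformityTopology_iff,
    le_antisymm (fUniformityTopology_le_fTopology X F) (fTopology_le_fUniformityTopology X F)]
end
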